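/- Let G be a context-free game, let (σ_k) be a sequence of one-pass strategies converging to a one-pass strategy σ, and let L_1 ⊆ L_2 ⊆ ⋯ be languages such that L_k ⊆ W(σ_k) for every k. Let L = ∪_k L_k. Then σ wins on every word w ∈ L for which every play of σ on w is finite. -/
import Mathlib


namespace CFG

/-- Juliet's two kinds of moves. -/
inductive JMove : Type
  | call : JMove
  | read : JMove
deriving DecidableEq

/-- The extended alphabet Σ̂: `Sum.inl a` is the plain symbol `a`,
`Sum.inr a` is the "called" copy `â`. -/
abbrev HSym (A : Type) : Type := A ⊕ A

/-- The homomorphism ♮ deleting called symbols. -/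
def flat {A : Type} (α : List (HSym A)) : List A :=
  α.filterMap (fun x => match x with | Sum.inl a => some a | Sum.inr _ => none)

/-- A context-free game: a (minimal) DFA `T` over `A` with finite state set `Q`,
and a replacement relation `R` with nonempty replacement words and regular
replacement languages. -/
structure CFGame (A : Type) where
  Q : Type
  fintypeQ : Fintype Q
  T : DFA A Q
  minimal_reachable : ∀ q : Q, ∃ w : List A, T.evalFrom T.start w = q
  minimal_distinguishable :
    ∀ q q' : Q, (∀ w : List A, T.evalFrom q w ∈ T.accept ↔ T.evalFrom q' w ∈ T.accept) → q = q'
  R : A → List A → Prop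
  R_ne : ∀ a v, R a v → v ≠ []
  R_regular : ∀ a, Language.IsRegular {v : List A | R a v}

variable {A : Type}

/-- `a` is a function symbol (its replacement language is nonempty). -/
def CFGame.Fn (G : CFGame A) (a : A) : Prop := ∃ v, G.R a v

/-- One-pass strategies of Juliet (values at non-function symbols are irrelevant). -/
abbrev JStrat (A : Type) : Type := List (HSym A) → A → JMove

/-- Strategies of Romeo (values at non-function symbols are irrelevant). -/
abbrev RStrat (A : Type) : Type := List (HSym A) → A → List A

/-- Validity of a Romeo strategy: replacement words belong to the replacement language. -/
def CFGame.RValid (G : CFGame A) (τ : RStrat A) : Prop :=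
  ∀ (α : List (HSym A)) (a : A), G.Fn a → G.R a (τ α a)

/-- Configurations, instrumented for depth bookkeeping: a history string, the
remaining string where every symbol is annotated with its call-nesting level,
and the maximal nesting depth of the `Call` moves played so far. -/
abbrev Config (A : Type) : Type := List (HSym A) × List (A × ℕ) × ℕ

/-- One step of a play: Juliet reads or calls the current symbol according to `σ`
(a call is only possible at a function symbol); a call is answered by `τ`. -/
noncomputable def CFGame.step (G : CFGame A) (σ : JStrat A) (τ : RStrat A) :
    Config A → Config A :=
  fun c =>
    match c with
    | (α, [], d) => (α, [], d)
    | (α, (a, k) :: v, d) =>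
      letI := Classical.propDecidable (G.Fn a ∧ σ α a = JMove.call)
      if G.Fn a ∧ σ α a = JMove.call then
        (α ++ [Sum.inr a], (τ α a).map (fun b => (b, k + 1)) ++ v, max d (k + 1))
      else (α ++ [Sum.inl a], v, d)

/-- The play of `σ` against `τ` on input word `w`, as the sequence of its
configurations (the configuration stays fixed once the remaining string is empty). -/
noncomputable def CFGame.play (G : CFGame A) (σ : JStrat A) (τ : RStrat A)
    (w : List A) (n : ℕ) : Config A :=
  (G.step σ τ)^[n] ([], w.map (fun a => (a, 0)), 0)

/-- `σ` wins on `w`: against every (valid) Romeo strategy, the play on `w` is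
finite and its final string belongs to the target language. -/
def CFGame.WinsOn (G : CFGame A) (σ : JStrat A) (w : List A) : Prop :=
  ∀ τ : RStrat A, G.RValid τ →
    ∃ n : ℕ, (G.play σ τ w n).2.1 = [] ∧
      G.T.evalFrom G.T.start (flat (G.play σ τ w n).1) ∈ G.T.accept

/-- The winning set `W(σ)`. -/
def CFGame.W (G : CFGame A) (σ : JStrat A) : Set (List A) := {w | G.WinsOn σ w}

/-- `σ` is terminating: every play of `σ` is finite. -/
def CFGame.Terminating (G : CFGame A) (σ : JStrat A) : Prop :=
  ∀ τ : RStrat A, G.RValid τ → ∀ w : List A, ∃ n : ℕ, (G.play σ τ w n).2.1 = []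

/-- `σ` is dominant: it dominates every one-pass strategy. -/
def CFGame.Dominant (G : CFGame A) (σ : JStrat A) : Prop :=
  ∀ σ' : JStrat A, G.W σ' ⊆ G.W σ

/-- `σ` is undominated: no one-pass strategy strictly dominates it. -/
def CFGame.Undominated (G : CFGame A) (σ : JStrat A) : Prop :=
  ¬ ∃ σ' : JStrat A, G.W σ ⊂ G.W σ'

/-- `σ` is forgetful: its decisions only depend on `♮α` and the current symbol. -/
def CFGame.Forgetful (G : CFGame A) (σ : JStrat A) : Prop :=
  ∀ (α β : List (HSym A)) (a : A), G.Fn a → flat α = flat β → σ α a = σ β a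

/-- `σ` is regular: the language `{αa : σ(α,a) = Call}` over Σ̂ is regular. -/
def CFGame.RegularStrat (G : CFGame A) (σ : JStrat A) : Prop :=
  Language.IsRegular
    {x : List (HSym A) | ∃ (α : List (HSym A)) (a : A),
      G.Fn a ∧ σ α a = JMove.call ∧ x = α ++ [Sum.inl a]}

/-- One step of a strategy automaton of a strongly regular strategy, on the state
set `Q ∪ {Call}` (`none` is the absorbing state `Call`). -/
def optStep {Q : Type} (δA : Q → A → Option Q) (o : Option Q) (a : A) : Option Q :=
  o.bind (fun q => δA q a)

/-- `σ` is strongly regular: given by an automaton obtained from `T` by rerouting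
some transitions to a new accepting state `Call`; Juliet plays `Call` on `(α,a)`
iff the automaton maps `♮α·a` to `Call`. -/
def CFGame.StronglyRegular (G : CFGame A) (σ : JStrat A) : Prop :=
  ∃ δA : G.Q → A → Option G.Q,
    (∀ q a, δA q a = some (G.T.step q a) ∨ δA q a = none) ∧
    ∀ (α : List (HSym A)) (a : A), G.Fn a →
      (σ α a = JMove.call ↔
        List.foldl (optStep δA) (some G.T.start) (flat α ++ [a]) = none)

/-- Shortlex (strict) order on words. -/
def shortLex [LinearOrder A] (v w : List A) : Prop :=
  v.length < w.length ∨ (v.length = w.length ∧ List.Lex (· < ·) v w)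

/-- `V <_sl W` for sets of words: the shortlex-least word of the symmetric
difference belongs to `W`. -/
def slLT [LinearOrder A] (V W : Set (List A)) : Prop :=
  ∃ w : List A, w ∈ W ∧ w ∉ V ∧ ∀ v : List A, shortLex v w → (v ∈ V ↔ v ∈ W)

/-- `V ≤_sl W` for sets of words. -/
def slLE [LinearOrder A] (V W : Set (List A)) : Prop := V = W ∨ slLT V W

/-- `σ` is weakly dominant: `W(σ') ≤_sl W(σ)` for every one-pass strategy `σ'`. -/
def CFGame.WeaklyDominant [LinearOrder A] (G : CFGame A) (σ : JStrat A) : Prop :=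
  ∀ σ' : JStrat A, slLE (G.W σ') (G.W σ)

/-- The bounded depth property. -/
def CFGame.BoundedDepthProperty (G : CFGame A) : Prop :=
  ∃ B : ℕ → ℕ, ∀ σ : JStrat A, ∀ k : ℕ, ∃ σk : JStrat A,
    ∀ w ∈ G.W σ, w.length ≤ k →
      G.WinsOn σk w ∧
      ∀ τ : RStrat A, G.RValid τ → ∀ n : ℕ, (G.play σk τ w n).2.2 ≤ B w.length

/-- Prefix-freeness of all replacement languages. -/
def CFGame.PrefixFree (G : CFGame A) : Prop :=
  ∀ (a : A) (u v : List A), G.R a u → G.R a v → u <+: v → u = v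

/-- Non-recursiveness: no function symbol can be derived from itself. -/
def CFGame.NonRecursive (G : CFGame A) : Prop :=
  ¬ ∃ (n : ℕ) (f : ℕ → A), 1 ≤ n ∧ f 0 = f n ∧ (∀ i ≤ n, G.Fn (f i)) ∧
    ∀ k < n, ∃ v : List A, G.R (f k) v ∧ f (k + 1) ∈ v

/-- `σ` is almost undominated: only finitely many words are lost by `σ` but won
by some strategy dominating `σ`. -/
def CFGame.AlmostUndominated (G : CFGame A) (σ : JStrat A) : Prop :=
  Set.Finite {w : List A | ¬ G.WinsOn σ w ∧
    ∃ σ' : JStrat A, G.W σ ⊆ G.W σ' ∧ G.WinsOn σ' w}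

/-- Convergence of a sequence of one-pass strategies. -/
def Converges (G : CFGame A) (σs : ℕ → JStrat A) (σ : JStrat A) : Prop :=
  ∀ n : ℕ, ∃ k0 : ℕ, ∀ k ≥ k0, ∀ α : List (HSym A), α.length ≤ n →
    ∀ a : A, G.Fn a → σ α a = σs k α a

/-- The one-pass strategy defined by a DFA `M` over Σ̂ (a strategy automaton):
play `Call` on `(α,a)` iff `M` accepts `α·a`. -/
noncomputable def autoStrat {S : Type} (M : DFA (HSym A) S) : JStrat A :=
  fun α a =>
    letI := Classical.propDecidable (M.eval (α ++ [Sum.inl a]) ∈ M.accept)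
    if M.eval (α ++ [Sum.inl a]) ∈ M.accept then JMove.call else JMove.read

/-- `States(q; w, σ)`: the `T`-states `δ*(q, ♮α)` over final history strings `α`
of plays of `σ` on `w`. -/
def CFGame.StatesOf (G : CFGame A) (σ : JStrat A) (q : G.Q) (w : List A) : Set G.Q :=
  {q' | ∃ τ : RStrat A, G.RValid τ ∧ ∃ n : ℕ,
    (G.play σ τ w n).2.1 = [] ∧ G.T.evalFrom q (flat (G.play σ τ w n).1) = q'}

/-- `(p, a, S)` is an effect triple of `σ`. -/
def CFGame.IsEffectTriple (G : CFGame A) (σ : JStrat A) (t : G.Q × A × Set G.Q) : Prop :=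
  G.StatesOf σ t.1 [t.2.1] ⊆ t.2.2

/-- An effect triple is trivial if `δ(p,a) ∈ S`. -/
def CFGame.TrivialTriple (G : CFGame A) (t : G.Q × A × Set G.Q) : Prop :=
  G.T.step t.1 t.2.1 ∈ t.2.2

/-- The substrategy `σ^α`. -/
def subStrat (σ : JStrat A) (α : List (HSym A)) : JStrat A :=
  fun β a => σ (α ++ β) a

/-- The effect set `E(σ)`: all effect triples of all substrategies of `σ`. -/
def CFGame.EffectSet (G : CFGame A) (σ : JStrat A) : Set (G.Q × A × Set G.Q) :=
  {t | ∃ α : List (HSym A), G.IsEffectTriple (subStrat σ α) t}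

/-- The transition relation of the NFA `N_E` associated with a set `E` of effect
triples (state set `P(Q)`, initial state `{s}`, accepting states the subsets of `F`). -/
def CFGame.NEStep (G : CFGame A) (E : Set (G.Q × A × Set G.Q))
    (S : Set G.Q) (a : A) (S' : Set G.Q) : Prop :=
  ∀ p ∈ S, ∃ S'' : Set G.Q, S'' ⊆ S' ∧ (p, a, S'') ∈ E

/-- A strategy for the online word problem `OnlineNFA(N_E)`. -/
def CFGame.NEOnlineStrat (G : CFGame A) (E : Set (G.Q × A × Set G.Q))
    (ρ : List A → Set G.Q) : Prop :=
  ρ [] = {G.T.start} ∧ ∀ (w : List A) (a : A), G.NEStep E (ρ w) a (ρ (w ++ [a]))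

/-- The winning set of a strategy for `OnlineNFA(N_E)`. -/
def CFGame.NEWins (G : CFGame A) (ρ : List A → Set G.Q) : Set (List A) :=
  {w | ρ w ⊆ G.T.accept}

/-- A strategy automaton `M` is `(p,a,St)`-inducing. -/
def CFGame.Inducing (G : CFGame A) {S : Type} (M : DFA (HSym A) S)
    (p : G.Q) (a : A) (St : Set G.Q) : Prop :=
  G.Terminating (autoStrat M) ∧ G.Fn a ∧
  (∀ u : List A, G.R a u → G.StatesOf (autoStrat M) p u ⊆ St) ∧
  ∃ QA : G.Q → Set S,
    (∀ q ∈ St, ∀ q' ∈ St, q ≠ q' → Disjoint (QA q) (QA q')) ∧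
    ∀ u : List A, G.R a u → ∀ τ : RStrat A, G.RValid τ → ∀ n : ℕ,
      (G.play (autoStrat M) τ u n).2.1 = [] →
      ((∀ q ∈ St,
          (M.eval (G.play (autoStrat M) τ u n).1 ∈ QA q ↔
            G.T.evalFrom p (flat (G.play (autoStrat M) τ u n).1) = q)) ∧
        ∀ β : List (HSym A), β <+: (G.play (autoStrat M) τ u n).1 →
          β ≠ (G.play (autoStrat M) τ u n).1 → ∀ r ∈ St, M.eval β ∉ QA r)


lemma play_succ' (G : CFGame A) (σ : JStrat A) (τ : RStrat A) (w : List A) (n : ℕ) :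
    G.play σ τ w (n + 1) = G.step σ τ (G.play σ τ w n) := by
  unfold CFGame.play
  rw [Function.iterate_succ_apply']

lemma step_nil (G : CFGame A) (σ : JStrat A) (τ : RStrat A) (α : List (HSym A)) (d : ℕ) :
    G.step σ τ (α, [], d) = (α, [], d) := by
  simp [CFGame.step]

lemma play_stable (G : CFGame A) (σ : JStrat A) (τ : RStrat A) (w : List A) (n : ℕ)
    (h : (G.play σ τ w n).2.1 = []) : ∀ m, n ≤ m → G.play σ τ w m = G.play σ τ w n := by
  intro m hm
  induction m with
  | zero =>
    have h0 : n = 0 := Nat.le_zero.mp hm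
    rw [h0]
  | succ m ih =>
    rcases Nat.lt_or_ge n (m + 1) with hlt | hge
    · have hmn : n ≤ m := Nat.lt_succ_iff.mp hlt
      have hih := ih hmn
      rw [play_succ', hih]
      rcases hp : G.play σ τ w n with ⟨α, r, d⟩
      rw [hp] at h
      simp only at h
      subst h
      exact step_nil G σ τ α d
    · have : n = m + 1 := le_antisymm hm hge
      rw [this]

lemma play_hist_len (G : CFGame A) (σ : JStrat A) (τ : RStrat A) (w : List A) (n : ℕ) :
    (G.play σ τ w n).1.length ≤ n := by
  induction n with
  | zero => simp [CFGame.play]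
  | succ n ih =>
    rw [play_succ']
    rcases hp : G.play σ τ w n with ⟨α, r, d⟩
    rw [hp] at ih
    simp only at ih
    match r with
    | [] => simpa [step_nil] using Nat.le_succ_of_le ih
    | (a, k) :: v =>
      by_cases hc : G.Fn a ∧ σ α a = JMove.call
      · simp only [CFGame.step, if_pos hc]
        simpa using ih
      · simp only [CFGame.step, if_neg hc]
        simpa using ih

lemma play_agree (G : CFGame A) (σ σ' : JStrat A) (τ : RStrat A) (w : List A) (n : ℕ)
    (h : ∀ α : List (HSym A), α.length ≤ n → ∀ a : A, G.Fn a → σ α a = σ' α a) :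
    ∀ i, i ≤ n → G.play σ τ w i = G.play σ' τ w i := by
  intro i hi
  induction i with
  | zero => rfl
  | succ i ih =>
    have hih := ih (Nat.le_of_succ_le hi)
    have hlen : (G.play σ τ w i).1.length ≤ n :=
      le_trans (play_hist_len G σ τ w i) (Nat.le_of_succ_le hi)
    rw [play_succ', play_succ', ← hih]
    rcases hp : G.play σ τ w i with ⟨α, r, d⟩
    rw [hp] at hlen
    simp only at hlen
    match r with
    | [] => rfl
    | (a, k) :: v =>
      have hcond : (G.Fn a ∧ σ α a = JMove.call) ↔ (G.Fn a ∧ σ' α a = JMove.call) := by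
        constructor
        · rintro ⟨hf, hc⟩; exact ⟨hf, by rw [← h α hlen a hf]; exact hc⟩
        · rintro ⟨hf, hc⟩; exact ⟨hf, by rw [h α hlen a hf]; exact hc⟩
      by_cases hfa : G.Fn a ∧ σ α a = JMove.call
      · simp only [CFGame.step, if_pos hfa, if_pos (hcond.mp hfa)]
      · simp only [CFGame.step, if_neg hfa, if_neg (fun hx => hfa (hcond.mpr hx))]

lemma L_mono' (L : ℕ → Set (List A)) (hmono : ∀ k, L k ⊆ L (k + 1)) :
    ∀ i j, i ≤ j → L i ⊆ L j := by
  intro i j hij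
  induction hij with
  | refl => exact le_refl _
  | step _ ih => exact fun x hx => hmono _ (ih hx)

theorem statement1 {A : Type} [Fintype A] (G : CFGame A)
    (σs : ℕ → JStrat A) (σ : JStrat A) (hconv : Converges G σs σ)
    (L : ℕ → Set (List A)) (hmono : ∀ k, L k ⊆ L (k + 1))
    (hwin : ∀ k, L k ⊆ G.W (σs k)) :
    ∀ w ∈ ⋃ k, L k,
      (∀ τ : RStrat A, G.RValid τ → ∃ n : ℕ, (G.play σ τ w n).2.1 = []) →
      G.WinsOn σ w := by
  intro w hw hterm
  obtain ⟨k1, hk1⟩ := Set.mem_iUnion.mp hw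
  intro τ hτ
  obtain ⟨n, hn⟩ := hterm τ hτ
  obtain ⟨k0, hk0⟩ := hconv n
  set k := max k0 k1 with hkdef
  have hwk : w ∈ L k := L_mono' L hmono k1 k (le_max_right _ _) hk1
  obtain ⟨m, hm1, hm2⟩ := hwin k hwk τ hτ
  have hagree : ∀ i, i ≤ n → G.play σ τ w i = G.play (σs k) τ w i :=
    play_agree G σ (σs k) τ w n
      (fun α hα a hfa => hk0 k (le_max_left _ _) α hα a hfa)
  rcases le_or_gt m n with hmn | hnm
  · refine ⟨m, ?_, ?_⟩
    · rw [hagree m hmn]; exact hm1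
    · rw [hagree m hmn]; exact hm2
  · refine ⟨n, hn, ?_⟩
    have hn' : (G.play (σs k) τ w n).2.1 = [] := by rw [← hagree n le_rfl]; exact hn
    have hst : G.play (σs k) τ w m = G.play (σs k) τ w n :=
      play_stable G (σs k) τ w n hn' m (le_of_lt hnm)
    rw [hagree n le_rfl, ← hst]
    exact hm2

end CFG
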